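/- arXiv:2404.08989 — 2 statements merged into one kernel-verified Lean document; each statement's English description precedes it below -/
import Mathlib

section
/- Let φ, ψ ∈ ℝ be such that 1, φ/(2π), ψ/(2π) are linearly independent over ℚ. Let (A, B) ∈ ℝ² with (A, B) ≠ (0, 0), let P and Q be real 2×2 matrices with det P ≠ 0 and det Q ≠ 0, and let D, E ∈ ℝ with D ≠ 0. Then for every σ ∈ {−1, 1}, the set of natural numbers k such that all four of the following hold is infinite: (i) σ·(A cos(kψ) − B sin(kψ)) > 0; (ii) σ·(A sin(kψ) + B cos(kψ)) > 0; (iii) S2(kφ)·E − S4(kφ)·D ≠ 0; (iv) S1(kφ)·E − S3(kφ)·D ≠ 0. -/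
/-- `S1(θ) = p₁₁(b₁₁ cos θ − b₂₁ sin θ) + p₁₂(b₁₁ sin θ + b₂₁ cos θ)`. -/
noncomputable def S1 (θ : ℝ) (P Q : Matrix (Fin 2) (Fin 2) ℝ) : ℝ :=
  P 0 0 * (Q 0 0 * Real.cos θ - Q 1 0 * Real.sin θ) +
  P 0 1 * (Q 0 0 * Real.sin θ + Q 1 0 * Real.cos θ)

/-- `S2(θ) = p₁₁(b₁₂ cos θ − b₂₂ sin θ) + p₁₂(b₁₂ sin θ + b₂₂ cos θ)`. -/
noncomputable def S2 (θ : ℝ) (P Q : Matrix (Fin 2) (Fin 2) ℝ) : ℝ :=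
  P 0 0 * (Q 0 1 * Real.cos θ - Q 1 1 * Real.sin θ) +
  P 0 1 * (Q 0 1 * Real.sin θ + Q 1 1 * Real.cos θ)

/-- `S3(θ) = p₂₁(b₁₁ cos θ − b₂₁ sin θ) + p₂₂(b₁₁ sin θ + b₂₁ cos θ)`. -/
noncomputable def S3 (θ : ℝ) (P Q : Matrix (Fin 2) (Fin 2) ℝ) : ℝ :=
  P 1 0 * (Q 0 0 * Real.cos θ - Q 1 0 * Real.sin θ) +
  P 1 1 * (Q 0 0 * Real.sin θ + Q 1 0 * Real.cos θ)

/-- `S4(θ) = p₂₁(b₁₂ cos θ − b₂₂ sin θ) + p₂₂(b₁₂ sin θ + b₂₂ cos θ)`. -/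
noncomputable def S4 (θ : ℝ) (P Q : Matrix (Fin 2) (Fin 2) ℝ) : ℝ :=
  P 1 0 * (Q 0 1 * Real.cos θ - Q 1 1 * Real.sin θ) +
  P 1 1 * (Q 0 1 * Real.sin θ + Q 1 1 * Real.cos θ)

/-!
Conditions (i) and (ii) say that the vector `(A, B)` rotated by `kψ` lies in an open quadrant.
The angles with this property form a nonempty open subset of `ℝ ⧸ 2πℤ`, which the orbit
`k ↦ kψ` visits infinitely often because `ψ / 2π` is irrational. Conditions (iii) and (iv)
have the form `c cos kφ + d sin kφ ≠ 0` with `(c, d) ≠ 0` (here `det P`, `det Q` and `D` enter),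
and two zeros `k₁ ≠ k₂` would make `(k₂ - k₁) φ` a multiple of `π`; so each of them excludes
at most one `k`.
-/

open Real Filter

theorem Irrational.of_linearIndependent {ι : Type*} {f : ι → ℝ} (hf : LinearIndependent ℚ f)
    {i j : ι} (hi : f i = 1) (hij : i ≠ j) : Irrational (f j) := by
  rintro ⟨q, hq⟩
  have h := (LinearIndepOn.pair_iff f hij).1 (hf.linearIndepOn _) q (-1)
    (by simp [hi, ← hq, Rat.smul_def])
  norm_num at h

theorem AddCircle.infinite_setOf_nsmul_mem {p a : ℝ} [Fact (0 < p)] (ha : Irrational (a / p))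
    {U : Set (AddCircle p)} (hU : IsOpen U) (hne : U.Nonempty) :
    {n : ℕ | n • (a : AddCircle p) ∈ U}.Infinite := by
  obtain ⟨x, hx⟩ := hne
  have hcluster : MapClusterPt x atTop (· • (a : AddCircle p) : ℕ → AddCircle p) :=
    ((mapClusterPt_atTop_nsmul_tfae x _).out 0 3).2 (denseRange_zsmul_coe_iff.2 ha x)
  exact Nat.frequently_atTop_iff_infinite.1 (hcluster.frequently (hU.mem_nhds hx))

theorem Real.Angle.infinite_setOf_nat_mul_mem {ψ : ℝ} (hψ : Irrational (ψ / (2 * π)))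
    {V : Set Angle} (hV : IsOpen V) (hne : V.Nonempty) :
    {n : ℕ | ((n * ψ : ℝ) : Angle) ∈ V}.Infinite := by
  have : Fact (0 < 2 * π) := ⟨two_pi_pos⟩
  convert AddCircle.infinite_setOf_nsmul_mem hψ hV hne using 3 with n
  rw [← nsmul_eq_mul, Angle.coe_nsmul]
  rfl

theorem exists_rotation_mem_open_quadrant {A B : ℝ} (hAB : (A, B) ≠ (0, 0)) {σ : ℝ} (hσ : σ ≠ 0) :
    ∃ t : ℝ, 0 < σ * (A * cos t - B * sin t) ∧ 0 < σ * (A * sin t + B * cos t) := by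
  set z : ℂ := ⟨σ * (A + B), σ * (A - B)⟩
  have hAB2 : 0 < A ^ 2 + B ^ 2 := by
    contrapose! hAB
    ext <;> dsimp <;> nlinarith [sq_nonneg A, sq_nonneg B]
  have hz : z ≠ 0 := by
    intro h
    simp only [z, Complex.ext_iff, Complex.zero_re, Complex.zero_im, mul_eq_zero, hσ,
      false_or] at h
    nlinarith [h.1, h.2]
  have hσ2 : 0 < σ * σ := mul_self_pos.2 hσ
  -- rotating `A + B i` by `arg z` lands on the ray through `σ (1 + i)`
  refine ⟨Complex.arg z, ?_, ?_⟩ <;>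
  · rw [Complex.cos_arg hz, Complex.sin_arg]
    have key : 0 < σ * σ * (A ^ 2 + B ^ 2) / ‖z‖ := by positivity
    convert key using 1
    simp only [z]
    field_simp
    ring

theorem infinite_setOf_rotation_mem_open_quadrant {ψ : ℝ} (hψ : Irrational (ψ / (2 * π)))
    {A B : ℝ} (hAB : (A, B) ≠ (0, 0)) {σ : ℝ} (hσ : σ ≠ 0) :
    {k : ℕ | 0 < σ * (A * cos (k * ψ) - B * sin (k * ψ)) ∧
      0 < σ * (A * sin (k * ψ) + B * cos (k * ψ))}.Infinite := by
  let V : Set Angle := {θ | 0 < σ * (A * θ.cos - B * θ.sin) ∧ 0 < σ * (A * θ.sin + B * θ.cos)}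
  have hV : IsOpen V := by
    have hcos := Angle.continuous_cos
    have hsin := Angle.continuous_sin
    have hre : Continuous fun θ : Angle ↦ σ * (A * θ.cos - B * θ.sin) := by fun_prop
    have him : Continuous fun θ : Angle ↦ σ * (A * θ.sin + B * θ.cos) := by fun_prop
    exact (isOpen_lt continuous_const hre).inter (isOpen_lt continuous_const him)
  obtain ⟨t, ht⟩ := exists_rotation_mem_open_quadrant hAB hσ
  have hne : V.Nonempty := ⟨t, by simpa [V, Angle.cos_coe, Angle.sin_coe] using ht⟩
  simpa only [V, Set.mem_ofPred_eq, Angle.cos_coe, Angle.sin_coe]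
    using Angle.infinite_setOf_nat_mul_mem hψ hV hne

theorem sin_sub_eq_zero_of_cos_add_sin_eq_zero {c d a b : ℝ} (hcd : (c, d) ≠ (0, 0))
    (ha : c * cos a + d * sin a = 0) (hb : c * cos b + d * sin b = 0) : sin (b - a) = 0 := by
  rw [sin_sub]
  by_contra h
  apply hcd
  ext
  · exact (mul_eq_zero.1 (by linear_combination sin b * ha - sin a * hb :
      c * (sin b * cos a - cos b * sin a) = 0)).resolve_right h
  · exact (mul_eq_zero.1 (by linear_combination cos a * hb - cos b * ha :
      d * (sin b * cos a - cos b * sin a) = 0)).resolve_right h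

theorem setOf_cos_add_sin_nat_mul_eq_zero_subsingleton {φ : ℝ} (hφ : Irrational (φ / (2 * π)))
    {c d : ℝ} (hcd : (c, d) ≠ (0, 0)) :
    {k : ℕ | c * cos (k * φ) + d * sin (k * φ) = 0}.Subsingleton := by
  intro k₁ h₁ k₂ h₂
  by_contra hne
  obtain ⟨n, hn⟩ := sin_eq_zero_iff.1 (sin_sub_eq_zero_of_cos_add_sin_eq_zero hcd h₁ h₂)
  have hk : ((k₂ : ℤ) - k₁ : ℤ) ≠ 0 := by omega
  apply (hφ.intCast_mul hk).ne_rat (n / 2)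
  push_cast
  field_simp
  linear_combination -hn

theorem mul_add_mul_sub_mul_ne_zero {u v x y : ℝ} (huv : (u, v) ≠ (0, 0))
    (hxy : (x, y) ≠ (0, 0)) : (u * x + v * y, v * x - u * y) ≠ (0, 0) := by
  -- the real and imaginary parts of `(u + v i) * (x - y i)`
  have h : (⟨u, v⟩ * ⟨x, -y⟩ : ℂ) ≠ 0 :=
    mul_ne_zero (by simpa [Complex.ext_iff] using huv) (by simpa [Complex.ext_iff] using hxy)
  intro h0
  simp only [Prod.mk.injEq] at h0
  exact h (Complex.ext (by simp [h0.1]) (by simp; linarith [h0.2]))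

theorem setOf_rotated_pairing_eq_zero_subsingleton {φ : ℝ} (hφ : Irrational (φ / (2 * π)))
    {u v x y : ℝ} (huv : (u, v) ≠ (0, 0)) (hxy : (x, y) ≠ (0, 0)) :
    {k : ℕ | u * (x * cos (k * φ) - y * sin (k * φ)) +
      v * (x * sin (k * φ) + y * cos (k * φ)) = 0}.Subsingleton := by
  have h (t : ℝ) : u * (x * cos t - y * sin t) + v * (x * sin t + y * cos t) =
      (u * x + v * y) * cos t + (v * x - u * y) * sin t := by ring
  simpa only [h] using
    setOf_cos_add_sin_nat_mul_eq_zero_subsingleton hφ (mul_add_mul_sub_mul_ne_zero huv hxy)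

theorem Matrix.fin_two_col_ne_zero_of_det_ne_zero {R : Type*} [CommRing R]
    {Q : Matrix (Fin 2) (Fin 2) R} (hQ : Q.det ≠ 0) (j : Fin 2) : (Q 0 j, Q 1 j) ≠ (0, 0) :=
  fun h ↦ hQ <| det_eq_zero_of_column_eq_zero j fun i ↦ by fin_cases i <;> simp_all [Prod.ext_iff]

theorem Matrix.fin_two_row_comb_ne_zero_of_det_ne_zero {R : Type*} [CommRing R]
    [NoZeroDivisors R] {P : Matrix (Fin 2) (Fin 2) R} (hP : P.det ≠ 0) {D : R} (hD : D ≠ 0)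
    (E : R) : (P 0 0 * E - P 1 0 * D, P 0 1 * E - P 1 1 * D) ≠ (0, 0) := by
  intro h
  simp only [Prod.mk.injEq] at h
  apply mul_ne_zero hD hP
  rw [det_fin_two]
  linear_combination P 0 1 * h.1 - P 0 0 * h.2

theorem stmt_3 (φ ψ : ℝ)
    (hind : LinearIndependent ℚ ![(1 : ℝ), φ / (2 * Real.pi), ψ / (2 * Real.pi)])
    (A B : ℝ) (hAB : (A, B) ≠ (0, 0))
    (P Q : Matrix (Fin 2) (Fin 2) ℝ) (hP : P.det ≠ 0) (hQ : Q.det ≠ 0)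
    (D E : ℝ) (hD : D ≠ 0) (σ : ℝ) (hσ : σ = -1 ∨ σ = 1) :
    {k : ℕ |
      σ * (A * Real.cos (k * ψ) - B * Real.sin (k * ψ)) > 0 ∧
      σ * (A * Real.sin (k * ψ) + B * Real.cos (k * ψ)) > 0 ∧
      S2 (k * φ) P Q * E - S4 (k * φ) P Q * D ≠ 0 ∧
      S1 (k * φ) P Q * E - S3 (k * φ) P Q * D ≠ 0}.Infinite := by
  have hφ : Irrational (φ / (2 * π)) := .of_linearIndependent hind (i := 0) (j := 1) rfl
    (by decide)
  have hψ : Irrational (ψ / (2 * π)) := .of_linearIndependent hind (i := 0) (j := 2) rfl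
    (by decide)
  have hσ0 : σ ≠ 0 := by rcases hσ with rfl | rfl <;> norm_num
  have hbad (j : Fin 2) := setOf_rotated_pairing_eq_zero_subsingleton hφ
    (P.fin_two_row_comb_ne_zero_of_det_ne_zero hP hD E) (Q.fin_two_col_ne_zero_of_det_ne_zero hQ j)
  refine ((infinite_setOf_rotation_mem_open_quadrant hψ hAB hσ0).sdiff
    ((hbad 1).finite.union (hbad 0).finite)).mono ?_
  rintro k ⟨⟨hre, him⟩, hk⟩
  simp only [Set.mem_union, Set.mem_ofPred_eq, not_or] at hk
  refine ⟨hre, him, fun h ↦ hk.1 ?_, fun h ↦ hk.2 ?_⟩ <;>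
  · simp only [S1, S2, S3, S4] at h
    linear_combination h
end

section
/- Let n, m ∈ ℕ with m ≤ n + 1, and let S1, S2, S3, S4, A, B, D, E ∈ ℝ satisfy: A > 0, B > 0, D ≠ 0, S1·S4 − S2·S3 ≠ 0, S2·E − S4·D ≠ 0, and S1·E − S3·D ≠ 0. Then there exist σ ∈ {−1, 1} and real numbers M ≠ 0 and N ≠ 0 such that M^{n+2−m}·N^{m+1}·D + σ·S1·N·A + σ·S2·M·B = 0 and M^{n+2−m}·N^{m+1}·E + σ·S3·N·A + σ·S4·M·B = 0. -/
/-!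
Look for solutions on a ray `N = c * M`. The ratio `c` is chosen so that the two linear parts
`σ M (c S1 A + S2 B)` and `σ M (c S3 A + S4 B)` are in the proportion `D : E`; then both equations
reduce to the single equation `c ^ (m + 1) D M ^ (n + 2) = -σ (c S1 A + S2 B)`, which has a real
root `M > 0` once the sign `σ` makes the right-hand side have the sign of `c ^ (m + 1) D`.
-/

lemma exists_pow_eq_sign_mul {R : ℝ} (hR : R ≠ 0) {k : ℕ} (hk : k ≠ 0) :
    ∃ σ M : ℝ, (σ = -1 ∨ σ = 1) ∧ 0 < M ∧ M ^ k = σ * R := by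
  rcases hR.lt_or_gt with hneg | hpos
  · refine ⟨-1, (-R) ^ (k⁻¹ : ℝ), .inl rfl, Real.rpow_pos_of_pos (by linarith) _, ?_⟩
    rw [Real.rpow_inv_natCast_pow (by linarith) hk]
    ring
  · refine ⟨1, R ^ (k⁻¹ : ℝ), .inr rfl, Real.rpow_pos_of_pos hpos _, ?_⟩
    rw [Real.rpow_inv_natCast_pow hpos.le hk, one_mul]

lemma exists_ratio_of_det_ne_zero {a₁₁ a₁₂ a₂₁ a₂₂ D E : ℝ}
    (hdet : a₁₁ * a₂₂ - a₁₂ * a₂₁ ≠ 0) (hD : D ≠ 0)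
    (h₁ : E * a₁₁ - D * a₂₁ ≠ 0) (h₂ : E * a₁₂ - D * a₂₂ ≠ 0) :
    ∃ c : ℝ, c ≠ 0 ∧ a₁₁ * c + a₁₂ ≠ 0 ∧ D * (a₂₁ * c + a₂₂) = E * (a₁₁ * c + a₁₂) := by
  set c := -(E * a₁₂ - D * a₂₂) / (E * a₁₁ - D * a₂₁)
  have hc : (E * a₁₁ - D * a₂₁) * c + (E * a₁₂ - D * a₂₂) = 0 := by
    simp only [c]
    field_simp
    ring
  refine ⟨c, fun hc₀ => h₂ (by simpa [hc₀] using hc), fun h₀ => hdet ?_, by linear_combination -hc⟩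
  -- otherwise `(c, 1)` would lie in the kernel of the nonsingular matrix `(aᵢⱼ)`
  have h₀' : a₂₁ * c + a₂₂ = 0 := by
    have : D * (a₂₁ * c + a₂₂) = 0 := by linear_combination -hc + E * h₀
    exact (mul_eq_zero.1 this).resolve_left hD
  linear_combination a₁₁ * h₀' - a₂₁ * h₀

lemma exists_monomial_solution {p q : ℕ} (hpq : 2 ≤ p + q) {c D E L₁ L₂ : ℝ}
    (hc : c ≠ 0) (hD : D ≠ 0) (hL₁ : L₁ ≠ 0) (hprop : D * L₂ = E * L₁) :
    ∃ σ M : ℝ, (σ = -1 ∨ σ = 1) ∧ M ≠ 0 ∧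
      M ^ p * (c * M) ^ q * D + σ * M * L₁ = 0 ∧ M ^ p * (c * M) ^ q * E + σ * M * L₂ = 0 := by
  have hcD : c ^ q * D ≠ 0 := mul_ne_zero (pow_ne_zero q hc) hD
  obtain ⟨σ, M, hσ, hM, hpow⟩ :=
    exists_pow_eq_sign_mul (div_ne_zero (neg_ne_zero.2 hL₁) hcD) (k := p + q - 1) (by omega)
  have hmono : M ^ p * (c * M) ^ q = M * (c ^ q * M ^ (p + q - 1)) := by
    rw [mul_pow, mul_left_comm, ← pow_add, ← pow_sub_one_mul (by omega : p + q ≠ 0) M]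
    ring
  have key₁ : c ^ q * M ^ (p + q - 1) * D = -σ * L₁ := by
    rw [mul_right_comm, hpow]
    field_simp
  have key₂ : c ^ q * M ^ (p + q - 1) * E = -σ * L₂ :=
    mul_left_cancel₀ hD (by linear_combination E * key₁ + σ * hprop)
  refine ⟨σ, M, hσ, hM.ne', ?_, ?_⟩
  · rw [hmono]; linear_combination M * key₁
  · rw [hmono]; linear_combination M * key₂

theorem stmt_4_general (n m : ℕ)
    (S1 S2 S3 S4 A B D E : ℝ)
    (hA : A > 0) (hB : B > 0) (hD : D ≠ 0)
    (hdet : S1 * S4 - S2 * S3 ≠ 0)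
    (h2 : S2 * E - S4 * D ≠ 0) (h1 : S1 * E - S3 * D ≠ 0) :
    ∃ σ M N : ℝ, (σ = -1 ∨ σ = 1) ∧ M ≠ 0 ∧ N ≠ 0 ∧
      M ^ (n + 2 - m) * N ^ (m + 1) * D + σ * S1 * N * A + σ * S2 * M * B = 0 ∧
      M ^ (n + 2 - m) * N ^ (m + 1) * E + σ * S3 * N * A + σ * S4 * M * B = 0 := by
  obtain ⟨c, hc, hL, hprop⟩ :=
    exists_ratio_of_det_ne_zero (a₁₁ := S1 * A) (a₁₂ := S2 * B) (a₂₁ := S3 * A) (a₂₂ := S4 * B) (E := E)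
      (by convert mul_ne_zero (mul_ne_zero hA.ne' hB.ne') hdet using 1; ring) hD
      (by convert mul_ne_zero hA.ne' h1 using 1; ring) (by convert mul_ne_zero hB.ne' h2 using 1; ring)
  obtain ⟨σ, M, hσ, hM, h₁, h₂⟩ :=
    exists_monomial_solution (p := n + 2 - m) (q := m + 1) (by omega) hc hD hL hprop
  exact ⟨σ, M, c * M, hσ, hM, mul_ne_zero hc hM, by linear_combination h₁, by linear_combination h₂⟩

theorem stmt_4 (n m : ℕ) (hm : m ≤ n + 1)
    (S1 S2 S3 S4 A B D E : ℝ)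
    (hA : A > 0) (hB : B > 0) (hD : D ≠ 0)
    (hdet : S1 * S4 - S2 * S3 ≠ 0)
    (h2 : S2 * E - S4 * D ≠ 0) (h1 : S1 * E - S3 * D ≠ 0) :
    ∃ σ M N : ℝ, (σ = -1 ∨ σ = 1) ∧ M ≠ 0 ∧ N ≠ 0 ∧
      M ^ (n + 2 - m) * N ^ (m + 1) * D + σ * S1 * N * A + σ * S2 * M * B = 0 ∧
      M ^ (n + 2 - m) * N ^ (m + 1) * E + σ * S3 * N * A + σ * S4 * M * B = 0 :=
  stmt_4_general n m S1 S2 S3 S4 A B D E hA hB hD hdet h2 h1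
end
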